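/- Let α, β > 0 and γ = 0, and let (u,f) be a twice continuously differentiable solution on (0,∞) of u'' = (αβ/2) f² u + u(u²−1)/r² and (r² f')' = β f u², with 0 < u(r) < 1 and 0 < f(r) < 1 for all r > 0, lim_{r→0} u(r) = 1, lim_{r→0} f(r) = 0, lim_{r→∞} u(r) = 0, lim_{r→∞} f(r) = 1, and finite energy. Then there exist constants C > 0 and R > 0 such that 1 − f(r) ≤ C/r for all r ≥ R; i.e. f(r) = 1 + O(1/r) as r → ∞. -/

import Mathlib

/-!
Since `f ≥ 1/2` far out, the source term `β f u²` of `(r² f')' = β f u²` is bounded by `2/α`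
times the energy density, so finite energy bounds `r² f'(r)` above by a constant `M` on
`[R, ∞)`. Then `f(r) + M/r` is nonincreasing there and tends to `1`, whence `1 - f(r) ≤ M/r`.
-/

open MeasureTheory Filter Set Topology

noncomputable section

/-- The integrand of the `γ = 0` energy functional
`I(u,f) = ∫₀^∞ [2 u'² + (1−u²)²/r² + α r² f'² + αβ f² u²] dr`. -/
def dmIntegrand0 (α β : ℝ) (u u' f f' : ℝ → ℝ) (r : ℝ) : ℝ :=
  2 * u' r ^ 2 + (1 - u r ^ 2) ^ 2 / r ^ 2
    + α * r ^ 2 * f' r ^ 2 + α * β * f r ^ 2 * u r ^ 2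

lemma sub_le_integral_Ioi_of_hasDerivAt_le {h g G : ℝ → ℝ} {a b : ℝ} (hab : a ≤ b)
    (hderiv : ∀ x ≥ a, HasDerivAt h (g x) x) (hle : ∀ x ≥ a, g x ≤ G x)
    (hG : IntegrableOn G (Ioi a)) (hG_nonneg : ∀ x > a, 0 ≤ G x) :
    h b - h a ≤ ∫ x in Ioi a, G x := by
  calc h b - h a ≤ ∫ x in a..b, G x :=
        intervalIntegral.sub_le_integral_of_hasDeriv_right_of_le hab
          (fun x hx => (hderiv x hx.1).continuousAt.continuousWithinAt)
          (fun x hx => (hderiv x hx.1.le).hasDerivWithinAt)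
          ((hG.mono_set Ioc_subset_Ioi_self).congr_set_ae Ioc_ae_eq_Icc.symm)
          (fun x hx => hle x hx.1.le)
    _ = ∫ x in Ioc a b, G x := intervalIntegral.integral_of_le hab
    _ ≤ ∫ x in Ioi a, G x :=
        setIntegral_mono_set hG ((ae_restrict_iff' measurableSet_Ioi).2
          (Eventually.of_forall hG_nonneg)) Ioc_subset_Ioi_self.eventuallyLE

lemma le_add_div_of_sq_mul_deriv_le {f f' : ℝ → ℝ} {R M L : ℝ} (hR : 0 < R)
    (hderiv : ∀ x ≥ R, HasDerivAt f (f' x) x) (hbound : ∀ x ≥ R, x ^ 2 * f' x ≤ M)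
    (hlim : Tendsto f atTop (𝓝 L)) {r : ℝ} (hr : R ≤ r) :
    L ≤ f r + M / r := by
  have hφ : ∀ x ≥ R, HasDerivAt (fun x => f x + M * x⁻¹) (f' x + M * -(x ^ 2)⁻¹) x :=
    fun x hx => (hderiv x hx).add ((hasDerivAt_inv (hR.trans_le hx).ne').const_mul M)
  have hanti : AntitoneOn (fun x => f x + M * x⁻¹) (Ici R) := by
    refine antitoneOn_of_hasDerivWithinAt_nonpos (convex_Ici R)
      (fun x hx => (hφ x hx).continuousAt.continuousWithinAt)
      (fun x hx => (hφ x (interior_subset hx)).hasDerivWithinAt) fun x hx => ?_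
    rw [interior_Ici] at hx
    rw [mul_neg, ← div_eq_mul_inv, add_neg_nonpos_iff, le_div_iff₀ (pow_pos (hR.trans hx) 2),
      mul_comm]
    exact hbound x hx.le
  have hlim' : Tendsto (fun x => f x + M * x⁻¹) atTop (𝓝 L) := by
    simpa using hlim.add (tendsto_inv_atTop_zero.const_mul M)
  rw [div_eq_mul_inv]
  exact le_of_tendsto hlim' ((eventually_ge_atTop r).mono fun x hx =>
    hanti (mem_Ici.2 hr) (mem_Ici.2 (hr.trans hx)) hx)

section Energy

variable {α β : ℝ} {u u' f f' : ℝ → ℝ}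

lemma dmIntegrand0_nonneg (hα : 0 ≤ α) (hβ : 0 ≤ β) (r : ℝ) :
    0 ≤ dmIntegrand0 α β u u' f f' r := by
  unfold dmIntegrand0
  positivity

lemma mul_sq_le_dmIntegrand0 (hα : 0 < α) (hβ : 0 ≤ β) {r : ℝ} (hf : 1 / 2 ≤ f r) :
    β * f r * u r ^ 2 ≤ 2 / α * dmIntegrand0 α β u u' f f' r := by
  have hrest : 0 ≤ 2 * u' r ^ 2 + (1 - u r ^ 2) ^ 2 / r ^ 2 + α * r ^ 2 * f' r ^ 2 := by
    positivity
  have hf2 : β * f r * u r ^ 2 ≤ 2 * β * f r ^ 2 * u r ^ 2 := by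
    have hβfu : 0 ≤ β * f r * u r ^ 2 := mul_nonneg (mul_nonneg hβ (by linarith)) (sq_nonneg _)
    nlinarith [mul_nonneg hβfu (by linarith : 0 ≤ 2 * f r - 1)]
  unfold dmIntegrand0
  rw [div_mul_eq_mul_div, le_div_iff₀ hα]
  nlinarith

end Energy

theorem f_decay_gamma_zero_general (α β : ℝ) (hα : 0 < α) (hβ : 0 < β)
    (u u' f f' : ℝ → ℝ)
    (hode : ∀ r : ℝ, 0 < r →
      HasDerivAt u (u' r) r ∧ HasDerivAt f (f' r) r ∧
      HasDerivAt u' (α * β / 2 * f r ^ 2 * u r + u r * (u r ^ 2 - 1) / r ^ 2) r ∧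
      HasDerivAt (fun s : ℝ => s ^ 2 * f' s) (β * f r * u r ^ 2) r)
    (hfinf : Tendsto f atTop (𝓝 1))
    (hfin : IntegrableOn (dmIntegrand0 α β u u' f f') (Ioi 0)) :
    ∃ C > (0 : ℝ), ∃ R > (0 : ℝ), ∀ r : ℝ, R ≤ r → 1 - f r ≤ C / r := by
  obtain ⟨R, hR⟩ := eventually_atTop.1
    ((hfinf.eventually (eventually_ge_nhds (by norm_num : (1 : ℝ) / 2 < 1))).and
      (eventually_gt_atTop 0))
  have hRpos : 0 < R := (hR R le_rfl).2
  set M := R ^ 2 * f' R + ∫ x in Ioi R, 2 / α * dmIntegrand0 α β u u' f f' x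
  have hbound : ∀ x ≥ R, x ^ 2 * f' x ≤ M := fun x hx => by
    have hgrowth := sub_le_integral_Ioi_of_hasDerivAt_le hx (fun y hy => (hode y (hR y hy).2).2.2.2)
      (fun y hy => mul_sq_le_dmIntegrand0 hα hβ.le (hR y hy).1)
      ((hfin.mono_set (Ioi_subset_Ioi hRpos.le)).const_mul _)
      (fun y _ => mul_nonneg (by positivity) (dmIntegrand0_nonneg hα.le hβ.le y))
    linarith
  refine ⟨max M 1, by positivity, R, hRpos, fun r hr => ?_⟩
  have hφ := le_add_div_of_sq_mul_deriv_le hRpos (fun x hx => (hode x (hR x hx).2).2.1) hbound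
    hfinf hr
  calc 1 - f r ≤ M / r := by linarith
    _ ≤ max M 1 / r := by gcongr; exacts [(hRpos.trans_le hr).le, le_max_left _ _]

/-- for a finite-energy solution in the `γ = 0` case,
`f(r) = 1 + O(1/r)` as `r → ∞`, i.e. `1 − f(r) ≤ C/r` for `r` large. -/
theorem f_decay_gamma_zero (α β : ℝ) (hα : 0 < α) (hβ : 0 < β)
    (u u' f f' : ℝ → ℝ)
    (hode : ∀ r : ℝ, 0 < r →
      HasDerivAt u (u' r) r ∧ HasDerivAt f (f' r) r ∧
      HasDerivAt u' (α * β / 2 * f r ^ 2 * u r + u r * (u r ^ 2 - 1) / r ^ 2) r ∧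
      HasDerivAt (fun s : ℝ => s ^ 2 * f' s) (β * f r * u r ^ 2) r)
    (hbounds : ∀ r : ℝ, 0 < r → 0 < u r ∧ u r < 1 ∧ 0 < f r ∧ f r < 1)
    (hu0 : Tendsto u (𝓝[>] (0 : ℝ)) (𝓝 1))
    (hf0 : Tendsto f (𝓝[>] (0 : ℝ)) (𝓝 0))
    (huinf : Tendsto u atTop (𝓝 0))
    (hfinf : Tendsto f atTop (𝓝 1))
    (hfin : IntegrableOn (dmIntegrand0 α β u u' f f') (Ioi 0)) :
    ∃ C > (0 : ℝ), ∃ R > (0 : ℝ), ∀ r : ℝ, R ≤ r → 1 - f r ≤ C / r :=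
  f_decay_gamma_zero_general α β hα hβ u u' f f' hode hfinf hfin
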